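/- Let f, g ∈ I be nonzero and t ∈ 𝕋ⁿ. If t·S(f) = S(g), then S(tf) = t·S(f). -/

import Mathlib

/-! Multiplying a representation `u` of `f` with `LT(u) = S(f)` by `t` gives `S(t f) ≤ t·S(f)`.
If the inequality were strict, the difference of `t u` and a representation of `t f` of leading
term `S(t f)` would be a syzygy with leading term `t·S(f) = S(g)`. But a signature is never the
leading term of a syzygy: subtracting a suitable multiple of it from a representation of `g` of
leading term `S(g)` would cancel that leading term. -/

open MvPolynomial

namespace F5

noncomputable section
open scoped Classical

/-- Monomials (power products) in `n` variables, represented by exponent vectors. -/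
abbrev Mon (n : ℕ) : Type := Fin n →₀ ℕ

/-- Module terms `t·eₗ` of the free module `Pᵐ`. -/
abbrev MTerm (n m : ℕ) : Type := (Fin n →₀ ℕ) × Fin m

/-- Action of a monomial on a module term: `u • (t eₗ) = (u t) eₗ`. -/
def mact {n m : ℕ} (u : Mon n) (σ : MTerm n m) : MTerm n m := (u + σ.1, σ.2)

/-- An admissible order on monomials: a linear order with `1 ≤ t` and
compatibility with multiplication. -/
structure AdmissibleOrder (n : ℕ) where
  ord : LinearOrder (Mon n)
  one_le : ∀ t : Mon n, ord.le 0 t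
  mul_lt_mul : ∀ s t u : Mon n, ord.lt s t → ord.lt (u + s) (u + t)

/-- An admissible module order on module terms: a linear well-order compatible
with the monomial action, and such that `σ ≤ u σ`. -/
structure ModuleOrder (n m : ℕ) where
  ord : LinearOrder (MTerm n m)
  wf : WellFounded ord.lt
  mul_lt_mul : ∀ (σ τ : MTerm n m) (u : Mon n), ord.lt σ τ → ord.lt (mact u σ) (mact u τ)
  le_mul : ∀ (σ : MTerm n m) (u : Mon n), ord.le σ (mact u σ)

variable {k : Type*} [Field k] {n m : ℕ}

/-- The leading monomial of a polynomial with respect to `μ` (junk value `0` for `f = 0`). -/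
noncomputable def pLT (μ : AdmissibleOrder n) (f : MvPolynomial (Fin n) k) : Mon n :=
  if h : f.support.Nonempty then @Finset.max' _ μ.ord f.support h else 0

/-- The leading coefficient of a polynomial with respect to `μ`. -/
noncomputable def pLC (μ : AdmissibleOrder n) (f : MvPolynomial (Fin n) k) : k :=
  f.coeff (pLT μ f)

/-- The set (finset) of module terms occurring in an element of `Pᵐ`. -/
noncomputable def msupport (u : Fin m → MvPolynomial (Fin n) k) : Finset (MTerm n m) :=
  letI := Classical.decEq (MTerm n m)
  Finset.univ.biUnion fun l => (u l).support.image fun t => (t, l)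

/-- A junk default module term (needs `m ≠ 0`). -/
def mdefault [NeZero m] : MTerm n m := (0, ⟨0, Nat.pos_of_ne_zero (NeZero.ne m)⟩)

/-- The leading module term of a nonzero element of `Pᵐ` with respect to `μ'`
(junk value for `0`). -/
noncomputable def mLT [NeZero m] (μ' : ModuleOrder n m) (u : Fin m → MvPolynomial (Fin n) k) :
    MTerm n m :=
  if h : (msupport u).Nonempty then @Finset.max' _ μ'.ord _ h else mdefault

/-- The map `v : Pᵐ → P`, `v(eᵢ) = fᵢ`. -/
noncomputable def vmap (F : Fin m → MvPolynomial (Fin n) k)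
    (u : Fin m → MvPolynomial (Fin n) k) : MvPolynomial (Fin n) k :=
  ∑ i, u i * F i

/-- The ideal `I = (f₁, …, fₘ)`. -/
noncomputable def idealI (F : Fin m → MvPolynomial (Fin n) k) : Ideal (MvPolynomial (Fin n) k) :=
  Ideal.span (Set.range F)

/-- `LT(Syz F)`: leading module terms of nonzero syzygies of `F`. -/
def LTSyz [NeZero m] (μ' : ModuleOrder n m) (F : Fin m → MvPolynomial (Fin n) k) :
    Set (MTerm n m) :=
  {σ | ∃ s : Fin m → MvPolynomial (Fin n) k, s ≠ 0 ∧ vmap F s = 0 ∧ mLT μ' s = σ}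

/-- The signature `S(f)`: the `μ'`-minimum of `{LT(u) : v(u) = f}` (junk for `f = 0` or
`f ∉ I`). -/
noncomputable def sig [NeZero m] (μ' : ModuleOrder n m) (F : Fin m → MvPolynomial (Fin n) k)
    (f : MvPolynomial (Fin n) k) : MTerm n m :=
  if hne : {σ : MTerm n m |
      ∃ u : Fin m → MvPolynomial (Fin n) k, u ≠ 0 ∧ vmap F u = f ∧ mLT μ' u = σ}.Nonempty
  then μ'.wf.min _ hne else mdefault

/-- `f` S-reduces to `g` with `h`, with respect to `σ`. -/
noncomputable def SReduces [NeZero m] (μ : AdmissibleOrder n) (μ' : ModuleOrder n m)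
    (F : Fin m → MvPolynomial (Fin n) k)
    (f h g : MvPolynomial (Fin n) k) (σ : MTerm n m) : Prop :=
  ∃ (t : Mon n) (α : k), α ≠ 0 ∧ g = f - (monomial t α) * h ∧
    (g = 0 ∨ μ.ord.lt (pLT μ g) (pLT μ f)) ∧
    μ'.ord.lt (sig μ' F ((monomial t (1 : k)) * h)) σ

/-- `f` is S-irreducible with respect to `σ`. -/
noncomputable def SIrr [NeZero m] (μ : AdmissibleOrder n) (μ' : ModuleOrder n m)
    (F : Fin m → MvPolynomial (Fin n) k) (f : MvPolynomial (Fin n) k) (σ : MTerm n m) : Prop :=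
  f = 0 ∨ ¬ ∃ h : MvPolynomial (Fin n) k, h ∈ idealI F ∧ h ≠ 0 ∧
    ∃ g : MvPolynomial (Fin n) k, SReduces μ μ' F f h g σ

/-- `G` is an S-Gröbner basis (of `I` w.r.t. `μ`, `F`, `μ'`). -/
noncomputable def IsSGB [NeZero m] (μ : AdmissibleOrder n) (μ' : ModuleOrder n m)
    (F : Fin m → MvPolynomial (Fin n) k) (G : Set (MvPolynomial (Fin n) k)) : Prop :=
  (∀ g ∈ G, g ∈ idealI F ∧ g ≠ 0) ∧
  ∀ f : MvPolynomial (Fin n) k, f ∈ idealI F → f ≠ 0 → SIrr μ μ' F f (sig μ' F f) →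
    ∃ g ∈ G, ∃ t : Mon n,
      pLT μ ((monomial t (1 : k)) * g) = pLT μ f ∧
      sig μ' F ((monomial t (1 : k)) * g) = sig μ' F f

/-- `LT(I)`: the set of leading monomials of nonzero elements of `I`. -/
def LTIdeal (μ : AdmissibleOrder n) (F : Fin m → MvPolynomial (Fin n) k) : Set (Mon n) :=
  {t | ∃ f : MvPolynomial (Fin n) k, f ∈ idealI F ∧ f ≠ 0 ∧ pLT μ f = t}

/-- `φ(t)`: the `μ'`-minimum signature of nonzero elements of `I` with leading monomial `t`. -/
noncomputable def phi [NeZero m] (μ : AdmissibleOrder n) (μ' : ModuleOrder n m)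
    (F : Fin m → MvPolynomial (Fin n) k) (t : Mon n) : MTerm n m :=
  if hne : {σ : MTerm n m | ∃ f : MvPolynomial (Fin n) k,
      f ∈ idealI F ∧ f ≠ 0 ∧ pLT μ f = t ∧ sig μ' F f = σ}.Nonempty
  then μ'.wf.min _ hne else mdefault

/-- `f` is a primitive S-irreducible polynomial. -/
noncomputable def PrimSIrr [NeZero m] (μ : AdmissibleOrder n) (μ' : ModuleOrder n m)
    (F : Fin m → MvPolynomial (Fin n) k) (f : MvPolynomial (Fin n) k) : Prop :=
  f ∈ idealI F ∧ f ≠ 0 ∧ SIrr μ μ' F f (sig μ' F f) ∧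
  ¬ ∃ (f' : MvPolynomial (Fin n) k) (t : Mon n),
      f' ∈ idealI F ∧ f' ≠ 0 ∧ t ≠ 0 ∧ SIrr μ μ' F f' (sig μ' F f') ∧
      pLT μ ((monomial t (1 : k)) * f') = pLT μ f ∧
      sig μ' F ((monomial t (1 : k)) * f') = sig μ' F f

/-- The lcm of two monomials (pointwise maximum of exponents). -/
def lcmMon {n : ℕ} (s t : Mon n) : Mon n := t + (s - t)

/-- The term `u₁ = lcm(LT g₁, LT g₂)/(LC g₁ · LT g₁)` (when the first argument is `g₁`). -/
noncomputable def uterm (μ : AdmissibleOrder n) (g₁ g₂ : MvPolynomial (Fin n) k) :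
    MvPolynomial (Fin n) k :=
  monomial (lcmMon (pLT μ g₁) (pLT μ g₂) - pLT μ g₁) (pLC μ g₁)⁻¹

/-- The S-polynomial of `g₁` and `g₂`. -/
noncomputable def Spol (μ : AdmissibleOrder n) (g₁ g₂ : MvPolynomial (Fin n) k) :
    MvPolynomial (Fin n) k :=
  uterm μ g₁ g₂ * g₁ - uterm μ g₂ g₁ * g₂

/-- `(g₁, g₂)` is a normal pair. -/
noncomputable def NormalPair [NeZero m] (μ : AdmissibleOrder n) (μ' : ModuleOrder n m)
    (F : Fin m → MvPolynomial (Fin n) k) (g₁ g₂ : MvPolynomial (Fin n) k) : Prop :=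
  PrimSIrr μ μ' F g₁ ∧ PrimSIrr μ μ' F g₂ ∧
  sig μ' F (uterm μ g₁ g₂ * g₁) =
    mact (lcmMon (pLT μ g₁) (pLT μ g₂) - pLT μ g₁) (sig μ' F g₁) ∧
  sig μ' F (uterm μ g₂ g₁ * g₂) =
    mact (lcmMon (pLT μ g₂) (pLT μ g₁) - pLT μ g₂) (sig μ' F g₂) ∧
  sig μ' F (uterm μ g₁ g₂ * g₁) ≠ sig μ' F (uterm μ g₂ g₁ * g₂)


end
end F5

namespace F5

variable {k : Type*} [Field k] {n m : ℕ}

namespace ModuleOrder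

variable (μ' : ModuleOrder n m) {σ τ ρ : MTerm n m}

protected theorem le_of_lt (h : μ'.ord.lt σ τ) : μ'.ord.le σ τ :=
  @le_of_lt _ μ'.ord.toPreorder _ _ h

protected theorem lt_of_le_of_lt (h₁ : μ'.ord.le σ τ) (h₂ : μ'.ord.lt τ ρ) : μ'.ord.lt σ ρ :=
  @lt_of_le_of_lt _ μ'.ord.toPreorder _ _ _ h₁ h₂

protected theorem not_lt_of_le (h : μ'.ord.le σ τ) : ¬ μ'.ord.lt τ σ :=
  @not_lt_of_ge _ μ'.ord.toPreorder _ _ h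

protected theorem le_of_not_lt (h : ¬ μ'.ord.lt σ τ) : μ'.ord.le τ σ :=
  (@not_lt _ μ'.ord _ _).mp h

protected theorem lt_or_eq_of_le (h : μ'.ord.le σ τ) : μ'.ord.lt σ τ ∨ σ = τ :=
  @lt_or_eq_of_le _ μ'.ord.toPartialOrder _ _ h

protected theorem lt_of_le_of_ne (h : μ'.ord.le σ τ) (hne : σ ≠ τ) : μ'.ord.lt σ τ :=
  @lt_of_le_of_ne _ μ'.ord.toPartialOrder _ _ h hne

theorem mact_le_mact (t : Mon n) (h : μ'.ord.le σ τ) : μ'.ord.le (mact t σ) (mact t τ) := by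
  rcases μ'.lt_or_eq_of_le h with h | rfl
  · exact μ'.le_of_lt (μ'.mul_lt_mul σ τ t h)
  · exact @le_refl _ μ'.ord.toPreorder _

end ModuleOrder

section Support

variable {u v : Fin m → MvPolynomial (Fin n) k} {σ : MTerm n m}

theorem mem_msupport : σ ∈ msupport u ↔ (u σ.2).coeff σ.1 ≠ 0 := by
  simp only [msupport, Finset.mem_biUnion, Finset.mem_univ, true_and, Finset.mem_image,
    MvPolynomial.mem_support_iff]
  exact ⟨fun ⟨_, _, hs, h⟩ => h ▸ hs, fun hσ => ⟨σ.2, σ.1, hσ, rfl⟩⟩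

theorem msupport_nonempty_iff : (msupport u).Nonempty ↔ u ≠ 0 := by
  refine ⟨fun ⟨σ, hσ⟩ hu => by simp [mem_msupport, hu] at hσ, fun hu => ?_⟩
  obtain ⟨i, hi⟩ := Function.ne_iff.mp hu
  obtain ⟨s, hs⟩ := MvPolynomial.ne_zero_iff.mp hi
  exact ⟨(s, i), mem_msupport.mpr hs⟩

theorem msupport_sub_subset : msupport (u - v) ⊆ msupport u ∪ msupport v := by
  intro σ hσ
  rw [Finset.mem_union, mem_msupport, mem_msupport]
  rw [mem_msupport, Pi.sub_apply, MvPolynomial.coeff_sub] at hσ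
  by_contra! h
  exact hσ (by rw [h.1, h.2, sub_zero])

theorem msupport_smul_subset (c : k) : msupport (c • u) ⊆ msupport u := by
  intro σ hσ
  rw [mem_msupport, Pi.smul_apply, MvPolynomial.coeff_smul, smul_eq_mul] at hσ
  exact mem_msupport.mpr (right_ne_zero_of_mul hσ)

end Support

section LeadingTerm

variable [NeZero m] {μ' : ModuleOrder n m} {u v : Fin m → MvPolynomial (Fin n) k}
  {σ : MTerm n m}

noncomputable def mLC (μ' : ModuleOrder n m) (u : Fin m → MvPolynomial (Fin n) k) : k :=
  (u (mLT μ' u).2).coeff (mLT μ' u).1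

theorem mLT_mem_msupport (hu : u ≠ 0) : mLT μ' u ∈ msupport u := by
  rw [mLT, dif_pos (msupport_nonempty_iff.mpr hu)]
  exact @Finset.max'_mem _ μ'.ord _ _

theorem mLC_ne_zero (hu : u ≠ 0) : mLC μ' u ≠ 0 :=
  mem_msupport.mp (mLT_mem_msupport hu)

theorem le_mLT (hσ : σ ∈ msupport u) : μ'.ord.le σ (mLT μ' u) := by
  rw [mLT, dif_pos ⟨σ, hσ⟩]
  exact @Finset.le_max' _ μ'.ord _ _ hσ

theorem coeff_eq_zero_of_mLT_lt (h : μ'.ord.lt (mLT μ' u) σ) : (u σ.2).coeff σ.1 = 0 :=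
  not_not.mp fun hσ => μ'.not_lt_of_le (le_mLT (mem_msupport.mpr hσ)) h

theorem mLT_le (hu : u ≠ 0) (h : ∀ τ ∈ msupport u, μ'.ord.le τ σ) :
    μ'.ord.le (mLT μ' u) σ := by
  rw [mLT, dif_pos (msupport_nonempty_iff.mpr hu)]
  exact @Finset.max'_le _ μ'.ord _ _ _ h

theorem mLT_lt (hu : u ≠ 0) (h : ∀ τ ∈ msupport u, μ'.ord.le τ σ) (hσ : σ ∉ msupport u) :
    μ'.ord.lt (mLT μ' u) σ :=
  μ'.lt_of_le_of_ne (mLT_le hu h) fun hEq => hσ (hEq ▸ mLT_mem_msupport hu)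

theorem mLT_eq (hσ : σ ∈ msupport u) (h : ∀ τ ∈ msupport u, μ'.ord.le τ σ) : mLT μ' u = σ :=
  @le_antisymm _ μ'.ord.toPartialOrder _ _
    (mLT_le (msupport_nonempty_iff.mp ⟨σ, hσ⟩) h) (le_mLT hσ)

theorem mLT_monomial_smul (hu : u ≠ 0) (t : Mon n) :
    mLT μ' (monomial t (1 : k) • u) = mact t (mLT μ' u) := by
  apply mLT_eq
  · rw [mem_msupport, Pi.smul_apply, smul_eq_mul]
    simpa [mact, MvPolynomial.coeff_monomial_mul, mLC] using mLC_ne_zero (μ' := μ') hu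
  · intro τ hτ
    rw [mem_msupport, Pi.smul_apply, smul_eq_mul, MvPolynomial.coeff_monomial_mul'] at hτ
    split_ifs at hτ with hle
    · rw [one_mul] at hτ
      have hτ_eq : mact t ((τ.1 - t, τ.2) : MTerm n m) = τ := by
        simp only [mact, add_tsub_cancel_of_le hle]
      exact hτ_eq ▸ μ'.mact_le_mact t (le_mLT (mem_msupport.mpr hτ))
    · exact absurd rfl hτ

theorem mem_msupport_sub_of_mLT_lt (hu : u ≠ 0) (h : μ'.ord.lt (mLT μ' v) (mLT μ' u)) :
    mLT μ' u ∈ msupport (u - v) := by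
  rw [mem_msupport, Pi.sub_apply, MvPolynomial.coeff_sub, coeff_eq_zero_of_mLT_lt h, sub_zero]
  exact mLC_ne_zero hu

theorem mLT_sub_of_mLT_lt (hu : u ≠ 0) (h : μ'.ord.lt (mLT μ' v) (mLT μ' u)) :
    mLT μ' (u - v) = mLT μ' u := by
  refine mLT_eq (mem_msupport_sub_of_mLT_lt hu h) fun τ hτ => ?_
  rcases Finset.mem_union.mp (msupport_sub_subset hτ) with hτ | hτ
  · exact le_mLT hτ
  · exact μ'.le_of_lt (μ'.lt_of_le_of_lt (le_mLT hτ) h)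

theorem mLT_sub_smul_lt (h : mLT μ' u = mLT μ' v) (hv : v ≠ 0)
    (hne : u - (mLC μ' u / mLC μ' v) • v ≠ 0) :
    μ'.ord.lt (mLT μ' (u - (mLC μ' u / mLC μ' v) • v)) (mLT μ' u) := by
  refine mLT_lt hne (fun τ hτ => ?_) ?_
  · rcases Finset.mem_union.mp (msupport_sub_subset hτ) with hτ | hτ
    · exact le_mLT hτ
    · exact h ▸ le_mLT (msupport_smul_subset _ hτ)
  · rw [mem_msupport, not_not, Pi.sub_apply, MvPolynomial.coeff_sub, Pi.smul_apply,
      MvPolynomial.coeff_smul, smul_eq_mul]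
    have hv' : (v (mLT μ' u).2).coeff (mLT μ' u).1 ≠ 0 := h ▸ mLC_ne_zero hv
    rw [mLC, mLC, ← h, div_mul_cancel₀ _ hv', sub_self]

end LeadingTerm

section Vmap

variable (F : Fin m → MvPolynomial (Fin n) k)

theorem vmap_zero : vmap F 0 = 0 := by
  simp [vmap]

theorem vmap_sub (u v : Fin m → MvPolynomial (Fin n) k) :
    vmap F (u - v) = vmap F u - vmap F v := by
  simp [vmap, sub_mul, Finset.sum_sub_distrib]

theorem vmap_smul {S : Type*} [DistribSMul S (MvPolynomial (Fin n) k)]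
    [IsScalarTower S (MvPolynomial (Fin n) k) (MvPolynomial (Fin n) k)]
    (s : S) (u : Fin m → MvPolynomial (Fin n) k) : vmap F (s • u) = s • vmap F u := by
  simp [vmap, Finset.smul_sum, smul_mul_assoc]

theorem ne_zero_of_vmap_eq {u : Fin m → MvPolynomial (Fin n) k} {f : MvPolynomial (Fin n) k}
    (hf : f ≠ 0) (hu : vmap F u = f) : u ≠ 0 := by
  rintro rfl
  exact hf (by rw [← hu, vmap_zero])

end Vmap

section Signature

variable [NeZero m] {μ' : ModuleOrder n m} {F : Fin m → MvPolynomial (Fin n) k}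
  {f g : MvPolynomial (Fin n) k}

theorem exists_mLT_eq_sig (hfI : f ∈ idealI F) (hf : f ≠ 0) :
    ∃ u, vmap F u = f ∧ mLT μ' u = sig μ' F f := by
  obtain ⟨c, hc⟩ := Ideal.mem_span_range_iff_exists_fun.mp hfI
  have hne : {σ | ∃ u, u ≠ 0 ∧ vmap F u = f ∧ mLT μ' u = σ}.Nonempty :=
    ⟨mLT μ' c, c, ne_zero_of_vmap_eq F hf hc, hc, rfl⟩
  obtain ⟨u, -, hu⟩ := μ'.wf.min_mem _ hne
  exact ⟨u, by rw [sig, dif_pos hne]; exact hu⟩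

theorem sig_le_mLT (hf : f ≠ 0) {u : Fin m → MvPolynomial (Fin n) k} (hu : vmap F u = f) :
    μ'.ord.le (sig μ' F f) (mLT μ' u) := by
  have hmem : mLT μ' u ∈ {σ | ∃ u, u ≠ 0 ∧ vmap F u = f ∧ mLT μ' u = σ} :=
    ⟨u, ne_zero_of_vmap_eq F hf hu, hu, rfl⟩
  rw [sig, dif_pos ⟨_, hmem⟩]
  exact μ'.le_of_not_lt (μ'.wf.not_lt_min _ hmem)

theorem sig_not_mem_LTSyz (hgI : g ∈ idealI F) (hg : g ≠ 0) : sig μ' F g ∉ LTSyz μ' F := by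
  rintro ⟨s, hs, hsv, hsLT⟩
  obtain ⟨u, huv, huLT⟩ := exists_mLT_eq_sig (μ' := μ') hgI hg
  have hv : vmap F (u - (mLC μ' u / mLC μ' s) • s) = g := by
    rw [vmap_sub, vmap_smul, hsv, smul_zero, sub_zero, huv]
  have hlt := mLT_sub_smul_lt (huLT.trans hsLT.symm) hs (ne_zero_of_vmap_eq F hg hv)
  rw [huLT] at hlt
  exact μ'.not_lt_of_le (sig_le_mLT hg hv) hlt

theorem exists_mLT_eq_mact_sig (hfI : f ∈ idealI F) (hf : f ≠ 0) (t : Mon n) :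
    ∃ u, vmap F u = monomial t (1 : k) * f ∧ mLT μ' u = mact t (sig μ' F f) := by
  obtain ⟨u, huv, huLT⟩ := exists_mLT_eq_sig (μ' := μ') hfI hf
  refine ⟨monomial t (1 : k) • u, by rw [vmap_smul, huv, smul_eq_mul], ?_⟩
  rw [mLT_monomial_smul (ne_zero_of_vmap_eq F hf huv), huLT]

theorem sig_monomial_mul_le (hfI : f ∈ idealI F) (hf : f ≠ 0) (t : Mon n) :
    μ'.ord.le (sig μ' F (monomial t (1 : k) * f)) (mact t (sig μ' F f)) := by
  obtain ⟨u, huv, huLT⟩ := exists_mLT_eq_mact_sig (μ' := μ') hfI hf t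
  exact huLT ▸ sig_le_mLT (mul_ne_zero (by simp) hf) huv

theorem mact_sig_mem_LTSyz_of_lt (hfI : f ∈ idealI F) (hf : f ≠ 0) {t : Mon n}
    (h : μ'.ord.lt (sig μ' F (monomial t (1 : k) * f)) (mact t (sig μ' F f))) :
    mact t (sig μ' F f) ∈ LTSyz μ' F := by
  have htf : monomial t (1 : k) * f ≠ 0 := mul_ne_zero (by simp) hf
  obtain ⟨u, huv, huLT⟩ := exists_mLT_eq_mact_sig (μ' := μ') hfI hf t
  obtain ⟨w, hwv, hwLT⟩ := exists_mLT_eq_sig (μ' := μ') (Ideal.mul_mem_left _ _ hfI) htf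
  have hwu : μ'.ord.lt (mLT μ' w) (mLT μ' u) := huLT ▸ hwLT ▸ h
  have hu : u ≠ 0 := ne_zero_of_vmap_eq F htf huv
  refine ⟨u - w, msupport_nonempty_iff.mp ⟨_, mem_msupport_sub_of_mLT_lt hu hwu⟩, ?_, ?_⟩
  · rw [vmap_sub, huv, hwv, sub_self]
  · rw [mLT_sub_of_mLT_lt hu hwu, huLT]

end Signature

end F5

open F5 MvPolynomial

/-- if `t·S(f) = S(g)` for some nonzero `g ∈ I`, then `S(tf) = t·S(f)`. -/
theorem stmt_3 {k : Type*} [Field k] {n m : ℕ} [NeZero m]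
    (μ' : ModuleOrder n m) (F : Fin m → MvPolynomial (Fin n) k)
    (f g : MvPolynomial (Fin n) k) (t : Mon n)
    (hfI : f ∈ idealI F) (hf : f ≠ 0)
    (hgI : g ∈ idealI F) (hg : g ≠ 0)
    (h : mact t (sig μ' F f) = sig μ' F g) :
    sig μ' F ((monomial t (1 : k)) * f) = mact t (sig μ' F f) := by
  rcases μ'.lt_or_eq_of_le (sig_monomial_mul_le hfI hf t) with hlt | heq
  · exact absurd (h ▸ mact_sig_mem_LTSyz_of_lt hfI hf hlt) (sig_not_mem_LTSyz hgI hg)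
  · exact heq
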